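/- arXiv:quant-ph/0208151 — 2 statements merged into one kernel-verified Lean document; each statement's English description precedes it below -/
import Mathlib

section
/- Let 𝓗 be a complex Hilbert space, let P and R be commuting unitary operators on 𝓗 with P² = R² = 𝟙, let σ, λ ∈ ℝ, and let 𝓚₋ := {ψ ∈ 𝓗 : Pψ = −ψ}; assume 𝓚₋ ≠ {0}. Consider the three conditions: (i) for every ψ ∈ 𝓚₋, e^{iπλ}·P(Rψ) = −e^{2πiσ}·ψ; (ii) λ − 2σ ∈ 1 + 2ℤ; (iii) for every ψ ∈ 𝓚₋, Rψ = −ψ. Then any two of the conditions (i), (ii), (iii) imply the third. [This is Lemma 6(ii), with P playing the role of the z-parity P_z, R the half-rotation R_z = e^{iπℓ_z}, and (i) expressing that the statistics phase κ = P_z e^{iπĵ_z} restricted to the odd subspace 𝓗₋ equals −e^{2πiσ}.] -/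
open Real

/-! Since `R` commutes with `P`, it preserves `𝓚₋`, where `P = -𝟙`; so on `𝓚₋` condition (i)
reads `e^{iπλ} R = e^{2πiσ}`. Condition (ii) says exactly `e^{iπλ} = -e^{2πiσ}`, and each pair of
the three conditions forces the third by cancelling a nonzero scalar or a nonzero vector of `𝓚₋`. -/

namespace Complex

lemma exp_pi_mul_I_eq_neg_one_iff (a : ℝ) :
    exp ((π * a : ℝ) * I) = -1 ↔ ∃ k : ℤ, a = 1 + 2 * k := by
  have hshift : exp ((π * a : ℝ) * I) = -exp ((π * (a - 1) : ℝ) * I) := by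
    rw [← mul_neg_one, ← exp_pi_mul_I, ← exp_add]
    push_cast; ring_nf
  rw [hshift, neg_inj, exp_eq_one_iff]
  refine exists_congr fun k => ⟨fun h => ?_, fun h => ?_⟩
  · have hπI : (π : ℂ) * I ≠ 0 := mul_ne_zero (ofReal_ne_zero.2 pi_ne_zero) I_ne_zero
    have : ((a : ℂ) - 1 - 2 * k) * (π * I) = 0 := by push_cast at h; linear_combination h
    exact_mod_cast
      (by linear_combination (mul_eq_zero.1 this).resolve_right hπI : (a : ℂ) = 1 + 2 * k)
  · rw [h]; push_cast; ring

lemma exp_pi_mul_I_eq_neg_exp_two_pi_mul_I_iff (σ lam : ℝ) :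
    exp ((π * lam : ℝ) * I) = -exp ((2 * π * σ : ℝ) * I) ↔
      ∃ k : ℤ, lam - 2 * σ = 1 + 2 * k := by
  have hsplit : exp ((π * lam : ℝ) * I) =
      exp ((π * (lam - 2 * σ) : ℝ) * I) * exp ((2 * π * σ : ℝ) * I) := by
    rw [← exp_add]; push_cast; ring_nf
  rw [hsplit, ← neg_one_mul, mul_left_inj' (exp_ne_zero _), exp_pi_mul_I_eq_neg_one_iff]

end Complex

section

variable {K M : Type*} [Field K] [AddCommGroup M] [Module K M]

lemma neg_smul_eq_smul_iff {d : K} (hd : d ≠ 0) {x y : M} : (-d) • x = d • y ↔ x = -y := by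
  rw [neg_smul, ← smul_neg, smul_right_inj hd, neg_eq_iff_eq_neg]

lemma smul_neg_eq_smul_iff {y : M} (hy : y ≠ 0) {c d : K} : c • -y = d • y ↔ c = -d := by
  rw [smul_neg, ← neg_smul, smul_left_inj hy, neg_eq_iff_eq_neg]

end

theorem two_of_three_spin_statistics_odd_general
    {𝓗 : Type*} [NormedAddCommGroup 𝓗] [InnerProductSpace ℂ 𝓗]
    (P R : 𝓗 ≃ₗᵢ[ℂ] 𝓗)
    (hPR : ∀ ψ : 𝓗, P (R ψ) = R (P ψ))
    (σ lam : ℝ)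
    (hne : ∃ ψ : 𝓗, P ψ = -ψ ∧ ψ ≠ 0) :
    ((∀ ψ : 𝓗, P ψ = -ψ → Complex.exp ((π * lam : ℝ) * Complex.I) • P (R ψ)
          = -(Complex.exp ((2 * π * σ : ℝ) * Complex.I) • ψ)) →
        (∃ k : ℤ, lam - 2 * σ = 1 + 2 * k) →
        (∀ ψ : 𝓗, P ψ = -ψ → R ψ = -ψ))
    ∧ ((∀ ψ : 𝓗, P ψ = -ψ → Complex.exp ((π * lam : ℝ) * Complex.I) • P (R ψ)
          = -(Complex.exp ((2 * π * σ : ℝ) * Complex.I) • ψ)) →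
        (∀ ψ : 𝓗, P ψ = -ψ → R ψ = -ψ) →
        (∃ k : ℤ, lam - 2 * σ = 1 + 2 * k))
    ∧ ((∃ k : ℤ, lam - 2 * σ = 1 + 2 * k) →
        (∀ ψ : 𝓗, P ψ = -ψ → R ψ = -ψ) →
        (∀ ψ : 𝓗, P ψ = -ψ → Complex.exp ((π * lam : ℝ) * Complex.I) • P (R ψ)
          = -(Complex.exp ((2 * π * σ : ℝ) * Complex.I) • ψ))) := by
  set c := Complex.exp ((π * lam : ℝ) * Complex.I)
  set d := Complex.exp ((2 * π * σ : ℝ) * Complex.I)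
  have hd : d ≠ 0 := Complex.exp_ne_zero _
  have hcd : c = -d ↔ ∃ k : ℤ, lam - 2 * σ = 1 + 2 * k :=
    Complex.exp_pi_mul_I_eq_neg_exp_two_pi_mul_I_iff σ lam
  have hodd : ∀ ψ, P ψ = -ψ → (c • P (R ψ) = -(d • ψ) ↔ c • R ψ = d • ψ) := fun ψ hψ => by
    rw [hPR, hψ, map_neg, smul_neg, neg_inj]
  refine ⟨fun hi hii ψ hψ => ?_, fun hi hiii => ?_, fun hii hiii ψ hψ => ?_⟩
  · have h := (hodd ψ hψ).1 (hi ψ hψ)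
    rwa [hcd.2 hii, neg_smul_eq_smul_iff hd] at h
  · obtain ⟨ψ, hψ, hψ0⟩ := hne
    have h := (hodd ψ hψ).1 (hi ψ hψ)
    rwa [hiii ψ hψ, smul_neg_eq_smul_iff hψ0, hcd] at h
  · rw [hodd ψ hψ, hiii ψ hψ, hcd.2 hii, neg_smul_neg]

/-- **Lemma 6(ii).** Let `𝓗` be a complex Hilbert space, `P` and `R` commuting
unitary involutions on `𝓗`, `σ, λ ∈ ℝ`, and `𝓚₋ = {ψ : Pψ = -ψ}` nonzero.
Of the conditions
(i) `e^{iπλ}·P·R = -e^{2πiσ}·𝟙` on `𝓚₋`, (ii) `λ - 2σ ∈ 1 + 2ℤ`,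
(iii) `R = -𝟙` on `𝓚₋`, any two imply the third. -/
theorem two_of_three_spin_statistics_odd
    {𝓗 : Type*} [NormedAddCommGroup 𝓗] [InnerProductSpace ℂ 𝓗] [CompleteSpace 𝓗]
    (P R : 𝓗 ≃ₗᵢ[ℂ] 𝓗)
    (hP : ∀ ψ : 𝓗, P (P ψ) = ψ) (hR : ∀ ψ : 𝓗, R (R ψ) = ψ)
    (hPR : ∀ ψ : 𝓗, P (R ψ) = R (P ψ))
    (σ lam : ℝ)
    (hne : ∃ ψ : 𝓗, P ψ = -ψ ∧ ψ ≠ 0) :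
    ((∀ ψ : 𝓗, P ψ = -ψ → Complex.exp ((π * lam : ℝ) * Complex.I) • P (R ψ)
          = -(Complex.exp ((2 * π * σ : ℝ) * Complex.I) • ψ)) →
        (∃ k : ℤ, lam - 2 * σ = 1 + 2 * k) →
        (∀ ψ : 𝓗, P ψ = -ψ → R ψ = -ψ))
    ∧ ((∀ ψ : 𝓗, P ψ = -ψ → Complex.exp ((π * lam : ℝ) * Complex.I) • P (R ψ)
          = -(Complex.exp ((2 * π * σ : ℝ) * Complex.I) • ψ)) →
        (∀ ψ : 𝓗, P ψ = -ψ → R ψ = -ψ) →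
        (∃ k : ℤ, lam - 2 * σ = 1 + 2 * k))
    ∧ ((∃ k : ℤ, lam - 2 * σ = 1 + 2 * k) →
        (∀ ψ : 𝓗, P ψ = -ψ → R ψ = -ψ) →
        (∀ ψ : 𝓗, P ψ = -ψ → Complex.exp ((π * lam : ℝ) * Complex.I) • P (R ψ)
          = -(Complex.exp ((2 * π * σ : ℝ) * Complex.I) • ψ))) :=
  two_of_three_spin_statistics_odd_general P R hPR σ lam hne
end

section
/- Let (W(θ))_{θ∈ℝ} be a cone rotation group on 𝓗_rel = L²(H₃, 2·λ₃; ℂ), let σ, λ ∈ ℝ, and assume there exists κ ∈ {1, −1} such that e^{iπλ}·P·W(π) = κ·𝟙 (equality of operators on 𝓗_rel). Then there is NO unitary operator U : L²(ℝ³, λ₃; ℂ) → 𝓗_rel such that W(θ) = e^{iθ(λ−2σ)}·U ρ₃(2θ) U* for all θ ∈ ℝ (equality of operators on all of 𝓗_rel). [This is the paper's claim in Section 4 that in three spatial dimensions the unrestricted additivity condition ĵ_z = 2U(L_z+σ)U* cannot hold as it stands: it would force 𝟙 to lie in S¹·P_z, i.e., the reflection P would be a scalar multiple of the identity, which is false.]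 -/
/-! Rotating by `2 · π` is the identity, so the assumed intertwining forces
`W(π) = e^{iπ(λ-2σ)} · 𝟙`, and the statistics relation then makes the reflection `P` a
scalar. It is not one: `P` sends the indicator of a cube above the plane `z = 0` to the indicator of
its mirror image, which is disjoint from it. -/

open MeasureTheory Real Set

noncomputable section

/-- The open half-space `H₃ = {(x,y,z) : x > 0}`. -/
def H3 : Set (ℝ × ℝ × ℝ) := {p | 0 < p.1}

/-- Rotation of space by angle `θ` about the `z`-axis. -/
def rot3 (θ : ℝ) (p : ℝ × ℝ × ℝ) : ℝ × ℝ × ℝ :=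
  (p.1 * Real.cos θ - p.2.1 * Real.sin θ, p.1 * Real.sin θ + p.2.1 * Real.cos θ, p.2.2)

/-- The reflection `(x,y,z) ↦ (x,y,-z)`. -/
def flipz (p : ℝ × ℝ × ℝ) : ℝ × ℝ × ℝ := (p.1, p.2.1, -p.2.2)

/-- The measure `2·λ₃` on the half-space `H₃`. -/
def μrel3 : Measure (ℝ × ℝ × ℝ) := (2 : ENNReal) • (volume.restrict H3)

/-- The two-particle relative state space `𝓗_rel = L²(H₃, 2·λ₃; ℂ)`. -/
abbrev HRel3 := Lp ℂ 2 μrel3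

/-- The single-particle space `L²(ℝ³, λ₃; ℂ)`. -/
abbrev HOne3 := Lp ℂ 2 (volume : Measure (ℝ × ℝ × ℝ))

/-- The cylindrical polar angle of a point of space. -/
def parg3 (p : ℝ × ℝ × ℝ) : ℝ := Complex.arg (p.1 + p.2.1 * Complex.I)

/-- The sector `{(r,φ,z) : r > 0, |φ| ≤ π/2 - ε}` in cylindrical coordinates. -/
def sector3 (ε : ℝ) : Set (ℝ × ℝ × ℝ) :=
  {p | (p.1, p.2.1) ≠ (0, 0) ∧ |parg3 p| ≤ π / 2 - ε}

open Classical in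
/-- Extension by zero of a wave function on `H₃` to all of `ℝ³`. -/
def ext3 (ψ : HRel3) : ℝ × ℝ × ℝ → ℂ := fun p => if p ∈ H3 then ψ p else 0

lemma rot3_neg_two_pi : rot3 (-(2 * π)) = id := by
  ext p <;> simp [rot3]

lemma measurePreserving_flipz : MeasurePreserving flipz := by
  rw [show flipz = Prod.map id (Prod.map id Neg.neg) from rfl, Measure.volume_eq_prod,
    Measure.volume_eq_prod]
  exact (MeasurePreserving.id _).prod
    ((MeasurePreserving.id _).prod (Measure.measurePreserving_neg _))

lemma measurableSet_H3 : MeasurableSet H3 := measurableSet_lt measurable_const measurable_fst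

lemma measurePreserving_flipz_μrel3 : MeasurePreserving flipz μrel3 μrel3 :=
  (measurePreserving_flipz.restrict_preimage measurableSet_H3).smul_measure _

lemma μrel3_apply_of_subset {S : Set (ℝ × ℝ × ℝ)} (hS : S ⊆ H3) :
    μrel3 S = 2 * volume S := by
  rw [μrel3, Measure.smul_apply, smul_eq_mul, Measure.restrict_eq_self _ hS]

def zCube (a : ℝ) : Set (ℝ × ℝ × ℝ) := Ioo 0 1 ×ˢ Ioo 0 1 ×ˢ Ioo a (a + 1)

lemma measurableSet_zCube (a : ℝ) : MeasurableSet (zCube a) :=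
  measurableSet_Ioo.prod (measurableSet_Ioo.prod measurableSet_Ioo)

lemma μrel3_zCube (a : ℝ) : μrel3 (zCube a) = 2 := by
  rw [μrel3_apply_of_subset fun p hp => hp.1.1, zCube, Measure.volume_eq_prod,
    Measure.prod_prod, Measure.volume_eq_prod, Measure.prod_prod]
  simp

lemma flipz_preimage_zCube_zero : flipz ⁻¹' zCube 0 = zCube (-1) := by
  ext p
  simp only [zCube, flipz, mem_preimage, mem_prod, mem_Ioo]
  constructor <;> rintro ⟨h₁, h₂, h₃, h₄⟩ <;> exact ⟨h₁, h₂, by linarith, by linarith⟩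

lemma disjoint_zCube_neg_one_zero : Disjoint (zCube (-1)) (zCube 0) :=
  disjoint_left.2 fun _ h₁ h₀ => by linarith [h₁.2.2.2, h₀.2.2.1]

theorem not_exists_reflection_eq_smul (P : HRel3 → HRel3)
    (hP : ∀ ψ : HRel3, ∀ᵐ p ∂μrel3, (P ψ) p = ψ (flipz p)) :
    ¬ ∃ d : ℂ, ∀ ψ, P ψ = d • ψ := by
  rintro ⟨d, hd⟩
  let ψ : HRel3 := indicatorConstLp 2 (measurableSet_zCube 0) (by simp [μrel3_zCube]) 1
  have hψ : ⇑ψ =ᵐ[μrel3] (zCube 0).indicator 1 := indicatorConstLp_coeFn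
  have hψ_flip : ⇑ψ ∘ flipz =ᵐ[μrel3] (zCube (-1)).indicator 1 := by
    rw [← flipz_preimage_zCube_zero]
    exact measurePreserving_flipz_μrel3.quasiMeasurePreserving.ae_eq_comp hψ
  have hae : ∀ᵐ p ∂μrel3, (zCube (-1)).indicator 1 p = d * (zCube 0).indicator 1 p := by
    filter_upwards [hP ψ, hψ_flip, hd ψ ▸ Lp.coeFn_smul d ψ, hψ] with p hPp hflip hsmul hψp
    rw [← hflip, Function.comp_apply, ← hPp, hsmul, Pi.smul_apply, hψp, smul_eq_mul]
  obtain ⟨p, hp, hp_eq⟩ := Measure.exists_mem_of_measure_ne_zero_of_ae (s := zCube (-1))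
    (by simp [μrel3_zCube]) (ae_restrict_of_ae hae)
  have hp_notMem : p ∉ zCube 0 := disjoint_left.1 disjoint_zCube_neg_one_zero hp
  simp [indicator_of_mem hp, indicator_of_notMem hp_notMem] at hp_eq

theorem three_dim_no_unrestricted_additivity_general
    (W : ℝ → (HRel3 ≃ₗᵢ[ℂ] HRel3))
    (P : HRel3 ≃ₗᵢ[ℂ] HRel3)
    (hP : ∀ ψ : HRel3, ∀ᵐ p ∂μrel3, (P ψ) p = ψ (flipz p))
    (ρ : ℝ → (HOne3 ≃ₗᵢ[ℂ] HOne3))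
    (hρ : ∀ θ : ℝ, ∀ f : HOne3,
      ∀ᵐ p ∂(volume : Measure (ℝ × ℝ × ℝ)), (ρ θ f) p = f (rot3 (-θ) p))
    (σ lam : ℝ) (κ : ℂ)
    (hstat : ∀ ψ : HRel3,
      Complex.exp ((π * lam : ℝ) * Complex.I) • P (W π ψ) = κ • ψ) :
    ¬ ∃ U : HOne3 ≃ₗᵢ[ℂ] HRel3, ∀ θ : ℝ, ∀ ψ : HRel3,
        W θ ψ = Complex.exp ((θ * (lam - 2 * σ) : ℝ) * Complex.I) •
          U (ρ (2 * θ) (U.symm ψ)) := by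
  rintro ⟨U, hU⟩
  have hρ_two_pi : ∀ f, ρ (2 * π) f = f := fun f =>
    Lp.ext (by simpa [Filter.EventuallyEq, rot3_neg_two_pi] using hρ (2 * π) f)
  set e : ℂ := Complex.exp ((π * lam : ℝ) * Complex.I)
  set c : ℂ := Complex.exp ((π * (lam - 2 * σ) : ℝ) * Complex.I)
  have hW_pi : ∀ ψ, W π ψ = c • ψ := fun ψ => by rw [hU, hρ_two_pi, U.apply_symm_apply]
  have hec : e * c ≠ 0 := mul_ne_zero (Complex.exp_ne_zero _) (Complex.exp_ne_zero _)
  refine not_exists_reflection_eq_smul P hP ⟨(e * c)⁻¹ * κ, fun ψ => ?_⟩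
  rw [mul_smul, ← hstat ψ, hW_pi, map_smul, smul_smul e c, inv_smul_smul₀ hec]

/-- **No unrestricted additivity in three dimensions (Section 4).** For a cone
rotation group `W` on `𝓗_rel = L²(H₃, 2λ₃)` commuting with the `z`-parity `P`,
with statistics phase `κ ∈ {1,-1}` given by `e^{iπλ}·P·W(π) = κ·𝟙`, there is
no unitary `U : L²(ℝ³) → 𝓗_rel` with `W(θ) = e^{iθ(λ-2σ)}·U ρ₃(2θ) U*` on all
of `𝓗_rel`. -/
theorem three_dim_no_unrestricted_additivity
    (W : ℝ → (HRel3 ≃ₗᵢ[ℂ] HRel3))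
    (P : HRel3 ≃ₗᵢ[ℂ] HRel3)
    (hP : ∀ ψ : HRel3, ∀ᵐ p ∂μrel3, (P ψ) p = ψ (flipz p))
    (hW_add : ∀ θ θ' : ℝ, ∀ ψ : HRel3, W (θ + θ') ψ = W θ (W θ' ψ))
    (hW_zero : ∀ ψ : HRel3, W 0 ψ = ψ)
    (hW_cont : ∀ ψ : HRel3, Continuous fun θ : ℝ => W θ ψ)
    (hW_2pi : ∀ ψ : HRel3, W (2 * π) ψ = ψ)
    (hW_loc : ∀ ε : ℝ, 0 < ε → ∀ θ : ℝ, |θ| < ε → ∀ ψ : HRel3,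
      (∀ᵐ p ∂μrel3, p ∉ sector3 ε → ψ p = 0) →
      ∀ᵐ p ∂μrel3, (W θ ψ) p = ext3 ψ (rot3 (-θ) p))
    (hW_P : ∀ θ : ℝ, ∀ ψ : HRel3, W θ (P ψ) = P (W θ ψ))
    (ρ : ℝ → (HOne3 ≃ₗᵢ[ℂ] HOne3))
    (hρ : ∀ θ : ℝ, ∀ f : HOne3,
      ∀ᵐ p ∂(volume : Measure (ℝ × ℝ × ℝ)), (ρ θ f) p = f (rot3 (-θ) p))
    (σ lam : ℝ) (κ : ℂ) (hκ : κ = 1 ∨ κ = -1)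
    (hstat : ∀ ψ : HRel3,
      Complex.exp ((π * lam : ℝ) * Complex.I) • P (W π ψ) = κ • ψ) :
    ¬ ∃ U : HOne3 ≃ₗᵢ[ℂ] HRel3, ∀ θ : ℝ, ∀ ψ : HRel3,
        W θ ψ = Complex.exp ((θ * (lam - 2 * σ) : ℝ) * Complex.I) •
          U (ρ (2 * θ) (U.symm ψ)) :=
  three_dim_no_unrestricted_additivity_general W P hP ρ hρ σ lam κ hstat
end
end
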